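/- Let n be odd with n ≥ 3, and let P = [n−1] ⊔ [n−1] be the disjoint union of two (n−1)-element chains. Then every orbit of the reverse operator 𝔛 on the lower sets of P contains exactly one lower set of cardinality n−1. -/

import Mathlib

/-- The reverse operator `𝔛` on lower sets of a poset: the lower set generated by
the minimal elements of the complement. -/
def XRev {α : Type*} [PartialOrder α] (I : Set α) : Set α :=
  {x | ∃ y, Minimal (fun z => z ∈ Iᶜ) y ∧ x ≤ y}

/-- The `𝔛`-orbit of a lower set `I` of a finite poset (forward iteration; since
`𝔛` is a bijection on lower sets of a finite poset, this is the full orbit). -/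
def XOrbit {α : Type*} [PartialOrder α] (I : Set α) : Set (Set α) :=
  {J | ∃ k : ℕ, XRev^[k] I = J}

/-! A lower set of `[m] ⊔ [m]` is a pair of initial segments, of sizes `a, b ∈ {0, …, m}`.
Reading `a, b` in `ZMod (m + 1)`, `𝔛` acts on both components as `a ↦ a + 1`, so the orbit of
`(a, b)` consists of the `(a + k, b + k)`. As `0 ≤ a + b ≤ 2m`, the size `a + b` equals `m` exactly
when `a + b = -1` in `ZMod (m + 1)`, i.e. when `2k = -1 - a - b`. Since `m + 1` is odd, `2` is a
unit, so this pins down `k` modulo `m + 1`, hence exactly one member of the orbit. -/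

open Sum

section DisjointUnion

variable {α β : Type*} [PartialOrder α] [PartialOrder β]

theorem Sum.minimal_inl_iff {P : α ⊕ β → Prop} {a : α} :
    Minimal P (inl a) ↔ Minimal (fun b => P (inl b)) a := by
  refine ⟨fun h => ⟨h.prop, fun b hb hba => ?_⟩, fun h => ⟨h.prop, ?_⟩⟩
  · exact inl_le_inl_iff.mp (h.le_of_le hb (inl_le_inl_iff.mpr hba))
  rintro (b | b) hb hba
  · exact inl_le_inl_iff.mpr (h.le_of_le hb (inl_le_inl_iff.mp hba))
  · exact absurd hba not_inr_le_inl

theorem Sum.minimal_inr_iff {P : α ⊕ β → Prop} {b : β} :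
    Minimal P (inr b) ↔ Minimal (fun c => P (inr c)) b := by
  refine ⟨fun h => ⟨h.prop, fun c hc hcb => ?_⟩, fun h => ⟨h.prop, ?_⟩⟩
  · exact inr_le_inr_iff.mp (h.le_of_le hc (inr_le_inr_iff.mpr hcb))
  rintro (c | c) hc hcb
  · exact absurd hcb not_inl_le_inr
  · exact inr_le_inr_iff.mpr (h.le_of_le hc (inr_le_inr_iff.mp hcb))

theorem mem_XRev {γ : Type*} [PartialOrder γ] {I : Set γ} {x : γ} :
    x ∈ XRev I ↔ ∃ y, Minimal (· ∈ Iᶜ) y ∧ x ≤ y := Iff.rfl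

theorem XRev_image_inl_union_image_inr (A : Set α) (B : Set β) :
    XRev (inl '' A ∪ inr '' B : Set (α ⊕ β)) = inl '' XRev A ∪ inr '' XRev B := by
  have hcompl : (inl '' A ∪ inr '' B : Set (α ⊕ β))ᶜ = inl '' Aᶜ ∪ inr '' Bᶜ := by
    ext (a | b) <;> simp
  ext (a | b) <;>
  simp [mem_XRev, Sum.exists, hcompl, Sum.minimal_inl_iff, Sum.minimal_inr_iff]

end DisjointUnion

section Chain

variable {m : ℕ}

def chainSeg (x : ZMod (m + 1)) : Set (Fin m) := {i | (i : ℕ) < x.val}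

theorem Fin.ncard_setOf_val_lt (a : ℕ) : {i : Fin m | (i : ℕ) < a}.ncard = min m a := by
  rw [← Fin.card_filter_val_lt, ← Set.ncard_coe_finset]
  simp

theorem ncard_chainSeg (x : ZMod (m + 1)) : (chainSeg x).ncard = x.val := by
  rw [chainSeg, Fin.ncard_setOf_val_lt, min_eq_right (Nat.lt_succ_iff.mp (ZMod.val_lt x))]

theorem IsLowerSet.exists_eq_chainSeg {S : Set (Fin m)} (hS : IsLowerSet S) :
    ∃ x : ZMod (m + 1), S = chainSeg x := by
  have hle : S.ncard ≤ m := by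
    simpa using Set.ncard_le_ncard (Set.subset_univ S)
  refine ⟨S.ncard, ?_⟩
  ext i
  rw [chainSeg, Set.mem_ofPred_eq, ZMod.val_cast_of_lt (Nat.lt_succ_of_le hle)]
  constructor
  · intro hi
    have hsub : {j : Fin m | (j : ℕ) < i + 1} ⊆ S := fun j hj => hS (Nat.lt_succ_iff.mp hj) hi
    have := Set.ncard_le_ncard hsub
    rw [Fin.ncard_setOf_val_lt, min_eq_right i.isLt] at this
    omega
  · intro hi
    by_contra hni
    have hsub : S ⊆ {j : Fin m | (j : ℕ) < i} := fun j hj =>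
      lt_of_not_ge fun hij => hni (hS hij hj)
    have := Set.ncard_le_ncard hsub
    rw [Fin.ncard_setOf_val_lt] at this
    omega

theorem minimal_compl_chainSeg_iff (x : ZMod (m + 1)) (i : Fin m) :
    Minimal (· ∈ (chainSeg x)ᶜ) i ↔ (i : ℕ) = x.val := by
  simp only [minimal_iff_forall_lt, chainSeg, Set.mem_compl_iff, Set.mem_ofPred_eq, not_lt,
    not_le]
  refine ⟨fun ⟨hxi, hbelow⟩ => le_antisymm ?_ hxi, fun h => ⟨h.ge, fun j hj => h ▸ hj⟩⟩
  by_contra! hlt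
  exact lt_irrefl _ (hbelow (show (⟨x.val, hlt.trans i.isLt⟩ : Fin m) < i from hlt))

theorem XRev_chainSeg (x : ZMod (m + 1)) : XRev (chainSeg x) = chainSeg (x + 1) := by
  have hval : (x + 1).val = (x.val + 1) % (m + 1) := by
    rw [ZMod.val_add, ZMod.val_one_eq_one_mod, Nat.add_mod_mod]
  ext i
  rw [mem_XRev]
  simp only [minimal_compl_chainSeg_iff]
  rw [chainSeg, Set.mem_ofPred_eq, hval]
  constructor
  · rintro ⟨y, hy, hiy⟩
    rw [Nat.mod_eq_of_lt (by omega)]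
    exact Nat.lt_succ_of_le (hy ▸ hiy)
  · intro hi
    have hxm : x.val < m := by
      by_contra! hmx
      have hxm : x.val = m := le_antisymm (Nat.lt_succ_iff.mp (ZMod.val_lt x)) hmx
      simp [hxm] at hi
    rw [Nat.mod_eq_of_lt (by omega)] at hi
    exact ⟨⟨x.val, hxm⟩, rfl, Nat.lt_succ_iff.mp hi⟩

end Chain

theorem ZMod.val_add_val_eq_iff_add_eq_neg_one {m : ℕ} (x y : ZMod (m + 1)) :
    x.val + y.val = m ↔ x + y = -1 := by
  rw [← (ZMod.val_injective _).eq_iff, ZMod.val_add, ZMod.val_neg_one]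
  have hx := ZMod.val_lt x
  have hy := ZMod.val_lt y
  constructor
  · intro h
    rw [h, Nat.mod_eq_of_lt (Nat.lt_succ_self m)]
  · intro h
    rcases lt_or_ge (x.val + y.val) (m + 1) with hlt | hge
    · rwa [Nat.mod_eq_of_lt hlt] at h
    · rw [Nat.mod_eq_sub_mod hge, Nat.mod_eq_of_lt (by omega)] at h
      omega

section ChainPair

variable {m : ℕ}

def chainPairSeg (x y : ZMod (m + 1)) : Set (Fin m ⊕ Fin m) :=
  inl '' chainSeg x ∪ inr '' chainSeg y

theorem IsLowerSet.exists_eq_chainPairSeg {I : Set (Fin m ⊕ Fin m)} (hI : IsLowerSet I) :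
    ∃ x y : ZMod (m + 1), I = chainPairSeg x y := by
  obtain ⟨x, hx⟩ := (hI.preimage fun _ _ => inl_le_inl_iff.mpr).exists_eq_chainSeg
  obtain ⟨y, hy⟩ := (hI.preimage fun _ _ => inr_le_inr_iff.mpr).exists_eq_chainSeg
  refine ⟨x, y, ?_⟩
  rw [chainPairSeg, ← hx, ← hy]
  ext (a | b) <;> simp

theorem ncard_chainPairSeg (x y : ZMod (m + 1)) :
    (chainPairSeg x y).ncard = x.val + y.val := by
  rw [chainPairSeg, Set.ncard_union_eq Set.disjoint_image_inl_image_inr,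
    Set.ncard_image_of_injective _ inl_injective, Set.ncard_image_of_injective _ inr_injective,
    ncard_chainSeg, ncard_chainSeg]

theorem XRev_iterate_chainPairSeg (x y : ZMod (m + 1)) (k : ℕ) :
    XRev^[k] (chainPairSeg x y) = chainPairSeg (x + (k : ZMod (m + 1))) (y + k) := by
  induction k with
  | zero => simp
  | succ k ih =>
    rw [Function.iterate_succ_apply', ih, chainPairSeg, XRev_image_inl_union_image_inr,
      XRev_chainSeg, XRev_chainSeg, chainPairSeg]
    simp only [Nat.cast_succ, add_assoc]

theorem existsUnique_ncard_eq_mem_XOrbit (hm : Odd (m + 1)) {I : Set (Fin m ⊕ Fin m)}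
    (hI : IsLowerSet I) : ∃! J, J ∈ XOrbit I ∧ J.ncard = m := by
  obtain ⟨x, y, rfl⟩ := hI.exists_eq_chainPairSeg
  have hcard (z : ZMod (m + 1)) :
      (chainPairSeg (x + z) (y + z)).ncard = m ↔ 2 * z = -1 - x - y := by
    rw [ncard_chainPairSeg, ZMod.val_add_val_eq_iff_add_eq_neg_one]
    constructor <;> intro h <;> linear_combination h
  have h2 : IsUnit (2 : ZMod (m + 1)) := by
    exact_mod_cast (ZMod.isUnit_iff_coprime 2 (m + 1)).mpr (Nat.coprime_two_left.mpr hm)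
  obtain ⟨z, hz, hz_unique⟩ := h2.unit.mulLeft_bijective.existsUnique (-1 - x - y)
  refine ⟨chainPairSeg (x + z) (y + z),
    ⟨⟨z.val, by rw [XRev_iterate_chainPairSeg, ZMod.natCast_zmod_val]⟩, (hcard z).2 hz⟩, ?_⟩
  rintro J ⟨⟨k, rfl⟩, hJ⟩
  rw [XRev_iterate_chainPairSeg] at hJ ⊢
  rw [hz_unique k ((hcard k).1 hJ)]

end ChainPair

theorem stmt14 (n : ℕ) (hodd : Odd n)
    (I : Set (Fin (n - 1) ⊕ Fin (n - 1))) (hI : IsLowerSet I) :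
    ∃! J : Set (Fin (n - 1) ⊕ Fin (n - 1)), J ∈ XOrbit I ∧ J.ncard = n - 1 := by
  obtain ⟨m, rfl⟩ : ∃ m, n = m + 1 := ⟨n - 1, (Nat.sub_add_cancel hodd.pos).symm⟩
  exact existsUnique_ncard_eq_mem_XOrbit hodd hI
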